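/- With the notation of the deterministic setting, for every sequence of indices (jₖ)_{k≥1} in ℕ* and every n ≥ 0: ψ_{j₁} + Σ_{k=1}^{n} M_{Q_{j₁}}* M_{Q_{j₂}}* ⋯ M_{Q_{jₖ}}* ψ_{j_{k+1}} = M_{j₁}* M_{j₂}* ⋯ M_{jₙ}* ψ_{j_{n+1}} (for n = 0 the right-hand side is ψ_{j₁}). -/

import Mathlib

/-!
The contraction `|||M_j x||| ≤ |||x|||` makes the eigenvalue `1` of each `M_j` semisimple: on a
Jordan chain `M_j v = v + w`, `M_j w = w` one has `M_j^n v = v + n w`, which stays bounded only if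
`w = 0`. Hence `P₁(M_j)` projects onto `ker (M_j - 1)` along `range (M_j - 1)`, so that
`M_j* ψ_j = ψ_j` and `⟨ψ_S, ψ_j⟩ = 1`, and `M_{Q_j}*` becomes `x ↦ M_j* x - ⟨ψ_S, x⟩ ψ_j`.
As every `M_j*` preserves `⟨ψ_S, ·⟩`, splitting off the first factor `M_{Q_{j₁}}*` makes the sum
telescope.
-/

open MeasureTheory Filter Matrix
open scoped BigOperators

namespace RRDO

/-- Euclidean inner product on `Fin d → ℂ`, antilinear in the first argument. -/
noncomputable def einner {d : ℕ} (φ χ : Fin d → ℂ) : ℂ :=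
  ∑ i, starRingEnd ℂ (φ i) * χ i

/-- Euclidean norm on `Fin d → ℂ`. -/
noncomputable def evnorm {d : ℕ} (v : Fin d → ℂ) : ℝ :=
  Real.sqrt (∑ i, ‖v i‖ ^ 2)

/-- The rank-one operator `|ψ⟩⟨φ|`, sending `χ` to `⟨φ, χ⟩ ψ`. -/
noncomputable def ketbra {d : ℕ} (ψ φ : Fin d → ℂ) : Matrix (Fin d) (Fin d) ℂ :=
  Matrix.of fun i j => ψ i * starRingEnd ℂ (φ j)

/-- Operator norm of a matrix induced by the Euclidean vector norm. -/
noncomputable def opNorm {d : ℕ} (A : Matrix (Fin d) (Fin d) ℂ) : ℝ :=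
  ⨆ v : {v : Fin d → ℂ // evnorm v ≤ 1}, evnorm (A.mulVec v)

/-- The spectral projection of `M` for the eigenvalue 1: the projection onto
`ker ((M-1)^d)` along `range ((M-1)^d)`. -/
noncomputable def specProj {d : ℕ} (M : Matrix (Fin d) (Fin d) ℂ) :
    Matrix (Fin d) (Fin d) ℂ :=
  letI := Classical.dec (IsCompl (LinearMap.ker ((M - 1) ^ d).mulVecLin)
      (LinearMap.range ((M - 1) ^ d).mulVecLin))
  if h : IsCompl (LinearMap.ker ((M - 1) ^ d).mulVecLin)
      (LinearMap.range ((M - 1) ^ d).mulVecLin) then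
    LinearMap.toMatrix'
      ((LinearMap.ker ((M - 1) ^ d).mulVecLin).subtype ∘ₗ
        Submodule.linearProjOfIsCompl _ _ h)
  else 0

/-- The set `M_(E)` of matrices whose spectrum meets the unit circle exactly in `{1}`,
with `1` an eigenvalue of algebraic multiplicity one. -/
def MsetE (d : ℕ) : Set (Matrix (Fin d) (Fin d) ℂ) :=
  {M | spectrum ℂ M ∩ {z : ℂ | ‖z‖ = 1} = {1} ∧ M.charpoly.rootMultiplicity 1 = 1}

/-- `ψ(M) = P₁(M)* ψS`. -/
noncomputable def psiv {d : ℕ} (ψS : Fin d → ℂ) (A : Matrix (Fin d) (Fin d) ℂ) :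
    Fin d → ℂ :=
  ((specProj A)ᴴ).mulVec ψS

/-- `M_Q = Q M Q` where `Q = 1 - |ψS⟩⟨ψ(M)|`. -/
noncomputable def MQm {d : ℕ} (ψS : Fin d → ℂ) (A : Matrix (Fin d) (Fin d) ℂ) :
    Matrix (Fin d) (Fin d) ℂ :=
  (1 - ketbra ψS (psiv ψS A)) * A * (1 - ketbra ψS (psiv ψS A))

/-- The ordered product `A 0 * A 1 * ⋯ * A (n-1)`. -/
noncomputable def fwdProd {d : ℕ} (A : ℕ → Matrix (Fin d) (Fin d) ℂ) (n : ℕ) :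
    Matrix (Fin d) (Fin d) ℂ :=
  ((List.range n).map A).prod

/-- The reversed ordered product `A (n-1) * ⋯ * A 1 * A 0`. -/
noncomputable def bwdProd {d : ℕ} (A : ℕ → Matrix (Fin d) (Fin d) ℂ) (n : ℕ) :
    Matrix (Fin d) (Fin d) ℂ :=
  (((List.range n).reverse).map A).prod

/-- `thetaSeq A ψS n` is `θ_{n+1} = A(n)* ⋯ A(1)* ψ(A 0)` (0-indexed). -/
noncomputable def thetaSeq {d : ℕ} (A : ℕ → Matrix (Fin d) (Fin d) ℂ) (ψS : Fin d → ℂ) :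
    ℕ → (Fin d → ℂ)
  | 0 => psiv ψS (A 0)
  | n + 1 => ((A (n + 1))ᴴ).mulVec (thetaSeq A ψS n)

/-- `P` is the infinite i.i.d. product measure built from `p` on sequence space. -/
def IsIIDproduct {Ω : Type*} [MeasurableSpace Ω] (p : Measure Ω)
    (P : Measure (ℕ → Ω)) : Prop :=
  ∀ (n : ℕ) (A : ℕ → Set Ω), (∀ i, MeasurableSet (A i)) →
    P {ω' : ℕ → Ω | ∀ i < n, ω' i ∈ A i} = ∏ i ∈ Finset.range n, p (A i)

/-- Entrywise expectation of a random matrix. -/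
noncomputable def Ematrix {Ω : Type*} [MeasurableSpace Ω] (p : Measure Ω) {d : ℕ}
    (M : Ω → Matrix (Fin d) (Fin d) ℂ) : Matrix (Fin d) (Fin d) ℂ :=
  Matrix.of fun i j => ∫ ω, M ω i j ∂p

/-- Entrywise expectation of a random vector. -/
noncomputable def Evec {Ω : Type*} [MeasurableSpace Ω] (p : Measure Ω) {d : ℕ}
    (v : Ω → Fin d → ℂ) : Fin d → ℂ :=
  fun i => ∫ ω, v ω i ∂p

/-- Assumption (RE) with constants `C, α`. -/
def AssumptionRE {Ω : Type*} [MeasurableSpace Ω] {d : ℕ}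
    (M : Ω → Matrix (Fin d) (Fin d) ℂ) (ψS : Fin d → ℂ)
    (P : Measure (ℕ → Ω)) (C α : ℝ) : Prop :=
  0 < C ∧ 0 < α ∧ ∃ Ωt : Set (ℕ → Ω), MeasurableSet Ωt ∧ P Ωt = 1 ∧
    ∀ ω' ∈ Ωt,
      (∃ n₀ : ℕ, ∀ n ≥ n₀,
        opNorm (fwdProd (fun i => MQm ψS (M (ω' i))) n) ≤ C * Real.exp (-α * n)) ∧
      ∀ n : ℕ, opNorm (fwdProd (fun i => MQm ψS (M (ω' i))) n) ≤ C

section Contraction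

variable {𝕜 E : Type*} [RCLike 𝕜] [AddCommGroup E] [Module 𝕜 E] {Nm : E → ℝ}

theorem nonneg_of_subadditive_of_homogeneous
    (hNmadd : ∀ x y, Nm (x + y) ≤ Nm x + Nm y)
    (hNmsmul : ∀ (c : 𝕜) (x : E), Nm (c • x) = ‖c‖ * Nm x) (x : E) : 0 ≤ Nm x := by
  have h0 : Nm 0 = 0 := by simpa using hNmsmul 0 0
  have hneg : Nm (-x) = Nm x := by simpa using hNmsmul (-1) x
  have := hNmadd x (-x)
  rw [add_neg_cancel, h0, hneg] at this
  linarith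

theorem disjoint_ker_range_sub_one_of_contraction
    (hNm0 : ∀ x, Nm x = 0 ↔ x = 0)
    (hNmadd : ∀ x y, Nm (x + y) ≤ Nm x + Nm y)
    (hNmsmul : ∀ (c : 𝕜) (x : E), Nm (c • x) = ‖c‖ * Nm x)
    {f : Module.End 𝕜 E} (hf : ∀ x, Nm (f x) ≤ Nm x) :
    Disjoint (LinearMap.ker (f - 1)) (LinearMap.range (f - 1)) := by
  rw [Submodule.disjoint_def]
  rintro _ hw ⟨v, rfl⟩
  set w := (f - 1) v
  have hfw : f w = w := sub_eq_zero.mp hw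
  have hfv : f v = v + w := by simp [w]
  have hpow : ∀ n : ℕ, (f ^ n) v = v + (n : 𝕜) • w := by
    intro n
    induction n with
    | zero => simp
    | succ n ih =>
      rw [pow_succ', Module.End.mul_apply, ih, map_add, map_smul, hfv, hfw]
      push_cast
      rw [add_smul, one_smul]
      abel
  have hpow_le : ∀ n : ℕ, Nm ((f ^ n) v) ≤ Nm v := by
    intro n
    induction n with
    | zero => simp
    | succ n ih => rw [pow_succ', Module.End.mul_apply]; exact (hf _).trans ih
  have hbound : ∀ n : ℕ, n * Nm w ≤ 2 * Nm v := by
    intro n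
    have hneg : Nm (-v) = Nm v := by simpa using hNmsmul (-1) v
    calc n * Nm w = Nm ((n : 𝕜) • w) := by rw [hNmsmul, RCLike.norm_natCast]
      _ = Nm ((f ^ n) v + -v) := by rw [hpow]; abel_nf
      _ ≤ 2 * Nm v := by linarith [hNmadd ((f ^ n) v) (-v), hpow_le n]
  have hw_nonneg := nonneg_of_subadditive_of_homogeneous hNmadd hNmsmul w
  refine (hNm0 w).mp (le_antisymm (not_lt.mp fun hw_pos => ?_) hw_nonneg)
  obtain ⟨n, hn⟩ := exists_nat_gt (2 * Nm v / Nm w)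
  rw [div_lt_iff₀ hw_pos] at hn
  linarith [hbound n]

end Contraction

section Fitting

variable {K V : Type*} [Field K] [AddCommGroup V] [Module K V] {g : Module.End K V}

theorem ker_pow_eq_ker_of_disjoint (hg : Disjoint (LinearMap.ker g) (LinearMap.range g))
    {k : ℕ} (hk : 0 < k) : LinearMap.ker (g ^ k) = LinearMap.ker g := by
  have hsq : LinearMap.ker (g ^ 1) = LinearMap.ker (g ^ (1 : ℕ).succ) := by
    refine le_antisymm ?_ fun x hx => ?_
    · rw [pow_succ', Module.End.mul_eq_comp]
      exact LinearMap.ker_le_ker_comp _ _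
    · rw [LinearMap.mem_ker, pow_succ, Module.End.mul_apply] at hx
      rw [pow_one]
      exact Submodule.disjoint_def.mp hg _ hx ⟨x, rfl⟩
  obtain ⟨m, rfl⟩ := Nat.exists_eq_add_of_le' hk
  rw [add_comm, ← Module.End.ker_pow_constant hsq m, pow_one]

variable [FiniteDimensional K V]

theorem range_pow_eq_range_of_disjoint (hg : Disjoint (LinearMap.ker g) (LinearMap.range g))
    {k : ℕ} (hk : 0 < k) : LinearMap.range (g ^ k) = LinearMap.range g := by
  refine Submodule.eq_of_le_of_finrank_le ?_ ?_
  · obtain ⟨m, rfl⟩ := Nat.exists_eq_add_of_le' hk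
    rw [pow_succ', Module.End.mul_eq_comp]
    exact LinearMap.range_comp_le_range _ _
  · have := LinearMap.finrank_range_add_finrank_ker (g ^ k)
    have := LinearMap.finrank_range_add_finrank_ker g
    rw [ker_pow_eq_ker_of_disjoint hg hk] at *
    omega

theorem isCompl_ker_range_of_disjoint (hg : Disjoint (LinearMap.ker g) (LinearMap.range g)) :
    IsCompl (LinearMap.ker g) (LinearMap.range g) := by
  have := LinearMap.finrank_range_add_finrank_ker g
  exact (Submodule.isCompl_iff_disjoint _ _ (by omega)).mpr hg

end Fitting

theorem mulVecLin_sub_one_pow {n R : Type*} [Fintype n] [DecidableEq n] [CommRing R]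
    (M : Matrix n n R) (k : ℕ) : ((M - 1) ^ k).mulVecLin = (Matrix.toLin' M - 1) ^ k := by
  rw [← Matrix.toLin'_apply', Matrix.toLin'_pow, map_sub, Matrix.toLin'_one, Module.End.one_eq_id]

section SpectralProjection

variable {d : ℕ} {M : Matrix (Fin d) (Fin d) ℂ}
  (hM : Disjoint (LinearMap.ker (Matrix.toLin' M - 1)) (LinearMap.range (Matrix.toLin' M - 1)))

include hM in
theorem isCompl_ker_range_sub_one_pow (hd : 0 < d) :
    IsCompl (LinearMap.ker ((M - 1) ^ d).mulVecLin) (LinearMap.range ((M - 1) ^ d).mulVecLin) := by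
  rw [mulVecLin_sub_one_pow, ker_pow_eq_ker_of_disjoint hM hd,
    range_pow_eq_range_of_disjoint hM hd]
  exact isCompl_ker_range_of_disjoint hM

theorem specProj_mulVec_eq_projection
    (h : IsCompl (LinearMap.ker ((M - 1) ^ d).mulVecLin) (LinearMap.range ((M - 1) ^ d).mulVecLin))
    (v : Fin d → ℂ) :
    specProj M *ᵥ v = (LinearMap.ker ((M - 1) ^ d).mulVecLin).projection _ h v := by
  rw [specProj, dif_pos h, LinearMap.toMatrix'_mulVec]
  rfl

include hM in
theorem specProj_mulVec_of_mulVec_eq {v : Fin d → ℂ} (hv : M *ᵥ v = v) : specProj M *ᵥ v = v := by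
  obtain rfl | hd := d.eq_zero_or_pos
  · exact Subsingleton.elim _ _
  have h := isCompl_ker_range_sub_one_pow hM hd
  rw [specProj_mulVec_eq_projection h]
  refine Submodule.projection_apply_of_mem_left h ?_
  rw [mulVecLin_sub_one_pow, ker_pow_eq_ker_of_disjoint hM hd, LinearMap.mem_ker]
  simp [hv]

include hM in
theorem specProj_mul_eq_specProj : specProj M * M = specProj M := by
  obtain rfl | hd := d.eq_zero_or_pos
  · exact Subsingleton.elim _ _
  have h := isCompl_ker_range_sub_one_pow hM hd
  suffices ∀ v, specProj M *ᵥ ((M - 1) *ᵥ v) = 0 by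
    refine Matrix.ext_iff_mulVec.mpr fun v => ?_
    rw [← Matrix.mulVec_mulVec, ← sub_eq_zero, ← Matrix.mulVec_sub]
    simpa [Matrix.sub_mulVec] using this v
  intro v
  rw [specProj_mulVec_eq_projection h]
  refine Submodule.projection_apply_of_mem_right h ?_
  rw [mulVecLin_sub_one_pow, range_pow_eq_range_of_disjoint hM hd]
  exact ⟨v, by simp [Matrix.sub_mulVec]⟩

end SpectralProjection

section Vectors

variable {d : ℕ}

theorem einner_eq_star_dotProduct (φ χ : Fin d → ℂ) : einner φ χ = star φ ⬝ᵥ χ := rfl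

theorem einner_conjTranspose_mulVec (A : Matrix (Fin d) (Fin d) ℂ) (x y : Fin d → ℂ) :
    einner x (Aᴴ *ᵥ y) = einner (A *ᵥ x) y := by
  rw [einner_eq_star_dotProduct, einner_eq_star_dotProduct, Matrix.dotProduct_mulVec,
    Matrix.star_mulVec]

theorem einner_self_of_evnorm_eq_one {v : Fin d → ℂ} (hv : evnorm v = 1) : einner v v = 1 := by
  rw [evnorm, Real.sqrt_eq_one] at hv
  simp only [einner, mul_comm (starRingEnd ℂ _), Complex.mul_conj']
  exact_mod_cast hv

theorem ketbra_mulVec (a b y : Fin d → ℂ) : ketbra a b *ᵥ y = einner b y • a := by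
  ext i
  simp only [ketbra, einner, Matrix.mulVec, dotProduct, Matrix.of_apply, Pi.smul_apply,
    smul_eq_mul, Finset.sum_mul]
  exact Finset.sum_congr rfl fun j _ => by ring

theorem conjTranspose_ketbra (a b : Fin d → ℂ) : (ketbra a b)ᴴ = ketbra b a := by
  ext i j
  simp [ketbra, mul_comm]

theorem conjTranspose_one_sub_ketbra_mulVec (a b y : Fin d → ℂ) :
    (1 - ketbra a b)ᴴ *ᵥ y = y - einner a y • b := by
  rw [Matrix.conjTranspose_sub, Matrix.conjTranspose_one, conjTranspose_ketbra, Matrix.sub_mulVec,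
    Matrix.one_mulVec, ketbra_mulVec]

end Vectors

section FixedVector

variable {d : ℕ} {M : Matrix (Fin d) (Fin d) ℂ} {ψS : Fin d → ℂ}
  (hM : Disjoint (LinearMap.ker (Matrix.toLin' M - 1)) (LinearMap.range (Matrix.toLin' M - 1)))

theorem einner_conjTranspose_mulVec_of_mulVec_eq (hfix : M *ᵥ ψS = ψS) (x : Fin d → ℂ) :
    einner ψS (Mᴴ *ᵥ x) = einner ψS x := by
  rw [einner_conjTranspose_mulVec, hfix]

include hM in
theorem conjTranspose_mulVec_psiv : Mᴴ *ᵥ psiv ψS M = psiv ψS M := by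
  rw [psiv, Matrix.mulVec_mulVec, ← Matrix.conjTranspose_mul, specProj_mul_eq_specProj hM]

include hM in
theorem einner_psiv (hfix : M *ᵥ ψS = ψS) (hψS : evnorm ψS = 1) : einner ψS (psiv ψS M) = 1 := by
  rw [psiv, einner_conjTranspose_mulVec, specProj_mulVec_of_mulVec_eq hM hfix,
    einner_self_of_evnorm_eq_one hψS]

include hM in
theorem conjTranspose_MQm_mulVec (hfix : M *ᵥ ψS = ψS) (hψS : evnorm ψS = 1) (x : Fin d → ℂ) :
    (MQm ψS M)ᴴ *ᵥ x = Mᴴ *ᵥ x - einner ψS x • psiv ψS M := by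
  set φ := psiv ψS M
  have hQ := conjTranspose_one_sub_ketbra_mulVec ψS φ
  have hzero : einner ψS (Mᴴ *ᵥ x - einner ψS x • φ) = 0 := by
    rw [einner_eq_star_dotProduct, dotProduct_sub, dotProduct_smul, ← einner_eq_star_dotProduct,
      ← einner_eq_star_dotProduct, einner_conjTranspose_mulVec_of_mulVec_eq hfix,
      einner_psiv hM hfix hψS, smul_eq_mul, mul_one, sub_self]
  rw [MQm, Matrix.conjTranspose_mul, Matrix.conjTranspose_mul, ← Matrix.mulVec_mulVec,
    ← Matrix.mulVec_mulVec, hQ x, Matrix.mulVec_sub, Matrix.mulVec_smul,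
    conjTranspose_mulVec_psiv hM, hQ, hzero, zero_smul, sub_zero]

end FixedVector

section Telescoping

variable {n R : Type*} [Fintype n] [DecidableEq n] [CommRing R] {ℓ : (n → R) → R}

theorem apply_prod_mulVec_of_forall_mem (l : List (Matrix n n R))
    (hl : ∀ A ∈ l, ∀ x, ℓ (A *ᵥ x) = ℓ x) (x : n → R) : ℓ (l.prod *ᵥ x) = ℓ x := by
  induction l with
  | nil => rw [List.prod_nil, Matrix.one_mulVec]
  | cons A l ih =>
    rw [List.prod_cons, ← Matrix.mulVec_mulVec, hl A List.mem_cons_self,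
      ih fun B hB => hl B (List.mem_cons_of_mem A hB)]

theorem sum_prod_mulVec_eq_prod_mulVec (A B : ℕ → Matrix n n R) (φ : ℕ → n → R)
    (hA : ∀ i x, ℓ (A i *ᵥ x) = ℓ x) (hφ : ∀ i, ℓ (φ i) = 1)
    (hB : ∀ i x, B i *ᵥ x = A i *ᵥ x - ℓ x • φ i) (N : ℕ) :
    ∑ k ∈ Finset.range (N + 1), ((List.range k).map B).prod *ᵥ φ k
      = ((List.range N).map A).prod *ᵥ φ N := by
  induction N generalizing A B φ with
  | zero => simp
  | succ N ih =>
    have hℓ : ℓ (((List.range N).map fun i => A (i + 1)).prod *ᵥ φ (N + 1)) = 1 := by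
      rw [apply_prod_mulVec_of_forall_mem (ℓ := ℓ) _ (by simp [hA]), hφ]
    rw [Finset.sum_range_succ']
    simp only [List.prod_range_succ', ← Matrix.mulVec_mulVec, ← Matrix.mulVec_sum]
    rw [ih _ _ _ (fun i => hA (i + 1)) (fun i => hφ (i + 1)) (fun i => hB (i + 1)), hB, hℓ,
      one_smul, List.range_zero, List.map_nil, List.prod_nil, Matrix.one_mulVec, sub_add_cancel]

end Telescoping

theorem stmt5
    {d : ℕ} (Mf : ℕ → Matrix (Fin d) (Fin d) ℂ)
    (ψS : Fin d → ℂ) (hψS : evnorm ψS = 1)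
    (Nm : (Fin d → ℂ) → ℝ)
    (hNm0 : ∀ x, Nm x = 0 ↔ x = 0)
    (hNmadd : ∀ x y, Nm (x + y) ≤ Nm x + Nm y)
    (hNmsmul : ∀ (c : ℂ) (x : Fin d → ℂ), Nm (c • x) = ‖c‖ * Nm x)
    (hcontr : ∀ j x, Nm ((Mf j).mulVec x) ≤ Nm x)
    (hfix : ∀ j, (Mf j).mulVec ψS = ψS)
    :
    ∀ (j : ℕ → ℕ) (n : ℕ),
      ∑ k ∈ Finset.range (n + 1),
          (((List.range k).map fun i => (MQm ψS (Mf (j i)))ᴴ).prod).mulVec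
            (psiv ψS (Mf (j k)))
        = (((List.range n).map fun i => (Mf (j i))ᴴ).prod).mulVec (psiv ψS (Mf (j n))) := by
  have hM : ∀ i, Disjoint (LinearMap.ker (Matrix.toLin' (Mf i) - 1))
      (LinearMap.range (Matrix.toLin' (Mf i) - 1)) := fun i =>
    disjoint_ker_range_sub_one_of_contraction hNm0 hNmadd hNmsmul (hcontr i)
  intro j n
  exact sum_prod_mulVec_eq_prod_mulVec (ℓ := einner ψS) _ _ _
    (fun i => einner_conjTranspose_mulVec_of_mulVec_eq (hfix (j i)))
    (fun i => einner_psiv (hM (j i)) (hfix (j i)) hψS)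
    (fun i => conjTranspose_MQm_mulVec (hM (j i)) (hfix (j i)) hψS) n

end RRDO
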